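/- Let x ∈ L²(ℝ, ℂ) and let g : ℝ → ℂ be continuously differentiable with g ∈ L²(ℝ) and g' ∈ L²(ℝ). Then for every ω ∈ ℝ, the function t ↦ V^t_g x(t, ω) is differentiable on ℝ, and its derivative satisfies ∂/∂t V^t_g x(t, ω) = 2πiω · V^t_g x(t, ω) − V^t_{g'} x(t, ω). -/

import Mathlib

/-!
With `φ σ = conj (g σ) e^{-2πiωσ}` the transform is the correlation `F t = ∫ x τ φ (τ - t)`.
Since `x` is only square integrable, one cannot differentiate under the integral sign directly.
Instead, the fundamental theorem of calculus in `t` for each `τ` and Fubini on `[a, b] × ℝ` give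
`F b - F a = -∫_a^b G` with `G t = ∫ x τ φ' (τ - t)`. The correlation `G` is continuous, being
an `L²` pairing of `x` against a translate of `φ'`, and translation is continuous on `L²`; so
`F' = -G`. The product rule for `φ'` produces the term `2πiω V_g x`.
-/

open MeasureTheory Complex Real
open scoped ENNReal

/-- Time-invariant STFT:
`V^t_g x (t, ω) = ∫ τ, x τ * conj (g (τ - t)) * exp (-2πiω(τ - t))`. -/
noncomputable def stftTimeInv (g x : ℝ → ℂ) (t ω : ℝ) : ℂ :=
  ∫ τ : ℝ, x τ * (starRingEnd ℂ) (g (τ - t)) *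
    Complex.exp (-2 * Real.pi * Complex.I * (ω : ℂ) * ((τ : ℂ) - (t : ℂ)))

section Correlation

variable {x φ : ℝ → ℂ}

lemma MeasureTheory.MemLp.comp_sub_right {p : ℝ≥0∞} (hφ : MemLp φ p volume) (t : ℝ) :
    MemLp (fun τ => φ (τ - t)) p volume :=
  hφ.comp_measurePreserving (measurePreserving_sub_right volume t)

lemma integrable_mul_comp_sub (hx : MemLp x 2 volume) (hφ : MemLp φ 2 volume) (t : ℝ) :
    Integrable (fun τ => x τ * φ (τ - t)) volume :=
  hx.integrable_mul (hφ.comp_sub_right t)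

lemma lintegral_enorm_mul_comp_sub_le (hx : MemLp x 2 volume) (hφ : MemLp φ 2 volume) (t : ℝ) :
    ∫⁻ τ, ‖x τ * φ (τ - t)‖ₑ ≤ eLpNorm x 2 volume * eLpNorm φ 2 volume := by
  have holder := eLpNorm_smul_le_mul_eLpNorm (p := 2) (q := 2) (r := 1)
    (hφ.comp_sub_right t).1 hx.1
  rwa [eLpNorm_one_eq_lintegral_enorm, ← Function.comp_def φ,
    eLpNorm_comp_measurePreserving hφ.1 (measurePreserving_sub_right volume t)] at holder

lemma integrable_prod_mul_comp_sub {μ : Measure ℝ} [IsFiniteMeasure μ] (hx : MemLp x 2 volume)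
    (hφc : Continuous φ) (hφ : MemLp φ 2 volume) :
    Integrable (fun p : ℝ × ℝ => x p.2 * φ (p.2 - p.1)) (μ.prod volume) := by
  refine ⟨hx.1.comp_snd.mul (hφc.comp (continuous_snd.sub continuous_fst)).aestronglyMeasurable,
    hasFiniteIntegral_iff_enorm.2 ?_⟩
  calc ∫⁻ p, ‖x p.2 * φ (p.2 - p.1)‖ₑ ∂μ.prod volume
      ≤ ∫⁻ t, ∫⁻ τ, ‖x τ * φ (τ - t)‖ₑ ∂volume ∂μ := lintegral_prod_le _
    _ ≤ ∫⁻ _, eLpNorm x 2 volume * eLpNorm φ 2 volume ∂μ :=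
      lintegral_mono fun t => lintegral_enorm_mul_comp_sub_le hx hφ t
    _ < ∞ := by
      rw [lintegral_const]
      exact ENNReal.mul_lt_top (ENNReal.mul_lt_top hx.2 hφ.2) (measure_lt_top μ _)

lemma continuous_integral_mul_comp_sub (hx : MemLp x 2 volume) (hφ : MemLp φ 2 volume) :
    Continuous fun t => ∫ τ, x τ * φ (τ - t) := by
  have : Fact ((1 : ℝ≥0∞) ≤ 2) := ⟨one_le_two⟩
  let shift : C(ℝ, C(ℝ, ℝ)) := ContinuousMap.curry ⟨fun p => p.2 - p.1, by fun_prop⟩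
  have hshift : ∀ t, MeasurePreserving (shift t) volume volume :=
    measurePreserving_sub_right volume
  let translate : ℝ → Lp ℂ 2 (volume : Measure ℝ) :=
    fun t => Lp.compMeasurePreserving (shift t) (hshift t) (hφ.toLp φ)
  have htranslate : Continuous translate := continuous_iff_continuousAt.2 fun t =>
    continuousAt_const.compMeasurePreservingLp shift.continuous.continuousAt hshift (by norm_num)
  have hinner : ∀ t,
      ∫ τ, x τ * φ (τ - t) = inner ℂ (hx.star.toLp (star x)) (translate t) := by
    intro t
    rw [L2.inner_def]
    refine integral_congr_ae ?_
    have htr : translate t =ᵐ[volume] fun τ => φ (τ - t) :=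
      (Lp.coeFn_compMeasurePreserving _ _).trans
        ((hshift t).quasiMeasurePreserving.ae_eq_comp (hφ.coeFn_toLp))
    filter_upwards [hx.star.coeFn_toLp, htr] with τ hxτ hφτ
    rw [RCLike.inner_apply, hxτ, hφτ, Pi.star_apply, RCLike.star_def, RCLike.conj_conj, mul_comm]
  simpa only [hinner] using continuous_const.inner htranslate

variable {Φ : ℝ → ℂ}

lemma integral_mul_comp_sub_eq_sub_intervalIntegral (hx : MemLp x 2 volume)
    (hφΦ : ∀ σ, HasDerivAt φ (Φ σ) σ) (hΦc : Continuous Φ) (hφ : MemLp φ 2 volume)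
    (hΦ : MemLp Φ 2 volume) (a b : ℝ) :
    ∫ τ, x τ * φ (τ - b) =
      (∫ τ, x τ * φ (τ - a)) - ∫ t in a..b, ∫ τ, x τ * Φ (τ - t) := by
  have ftc : ∀ τ, φ (τ - b) - φ (τ - a) = -∫ t in a..b, Φ (τ - t) := fun τ => by
    rw [intervalIntegral.integral_comp_sub_left, intervalIntegral.integral_eq_sub_of_hasDerivAt
      (fun σ _ => hφΦ σ) (hΦc.intervalIntegrable _ _), neg_sub]
  have : IsFiniteMeasure (volume.restrict (Set.uIoc a b)) :=
    isFiniteMeasure_restrict.2 measure_Ioc_lt_top.ne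
  have fubini := intervalIntegral_integral_swap (a := a) (b := b)
    (f := fun t τ => x τ * Φ (τ - t)) (integrable_prod_mul_comp_sub hx hΦc hΦ)
  have increment : (∫ τ, x τ * φ (τ - b)) - ∫ τ, x τ * φ (τ - a) =
      -∫ τ, ∫ t in a..b, x τ * Φ (τ - t) := by
    rw [← integral_sub (integrable_mul_comp_sub hx hφ b) (integrable_mul_comp_sub hx hφ a),
      ← integral_neg]
    congr with τ
    rw [← mul_sub, ftc, intervalIntegral.integral_const_mul, mul_neg]
  rw [fubini]
  linear_combination increment

lemma hasDerivAt_integral_mul_comp_sub (hx : MemLp x 2 volume)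
    (hφΦ : ∀ σ, HasDerivAt φ (Φ σ) σ) (hΦc : Continuous Φ) (hφ : MemLp φ 2 volume)
    (hΦ : MemLp Φ 2 volume) (t : ℝ) :
    HasDerivAt (fun s => ∫ τ, x τ * φ (τ - s)) (-∫ τ, x τ * Φ (τ - t)) t := by
  have ftc := ((continuous_integral_mul_comp_sub hx hΦ).integral_hasStrictDerivAt t t).hasDerivAt
  exact (ftc.const_sub _).congr_of_eventuallyEq (.of_forall fun s =>
    integral_mul_comp_sub_eq_sub_intervalIntegral hx hφΦ hΦc hφ hΦ t s)

end Correlation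

section Modulation

noncomputable def conjModulate (g : ℝ → ℂ) (ω σ : ℝ) : ℂ :=
  starRingEnd ℂ (g σ) * exp (-2 * π * I * ω * σ)

variable {g : ℝ → ℂ}

lemma norm_conjModulate (g : ℝ → ℂ) (ω σ : ℝ) : ‖conjModulate g ω σ‖ = ‖g σ‖ := by
  rw [conjModulate, norm_mul, RCLike.norm_conj, mul_comm (-2 * _ * I), norm_exp]
  simp

lemma MeasureTheory.MemLp.conjModulate {p : ℝ≥0∞} (hg : MemLp g p volume) (ω : ℝ) :
    MemLp (conjModulate g ω) p volume :=
  hg.of_le (hg.1.star.mul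
      (by fun_prop : Continuous fun σ : ℝ => exp (-2 * π * I * ω * σ)).aestronglyMeasurable)
    (.of_forall fun σ => (norm_conjModulate g ω σ).le)

lemma Continuous.conjModulate (hg : Continuous g) (ω : ℝ) : Continuous (conjModulate g ω) := by
  unfold _root_.conjModulate; fun_prop

lemma HasDerivAt.conjModulate {g' : ℝ → ℂ} {σ : ℝ} (hg : HasDerivAt g (g' σ) σ) (ω : ℝ) :
    HasDerivAt (conjModulate g ω)
      (conjModulate g' ω σ - 2 * π * I * ω * conjModulate g ω σ) σ := by
  have hexp := (((hasDerivAt_id σ).ofReal_comp).const_mul (-2 * π * I * ω)).cexp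
  refine (hg.star.mul hexp).congr_deriv ?_
  simp only [_root_.conjModulate, id, ofReal_one, mul_one, RCLike.star_def]
  ring

lemma stftTimeInv_eq_integral_conjModulate (g x : ℝ → ℂ) (t ω : ℝ) :
    stftTimeInv g x t ω = ∫ τ, x τ * conjModulate g ω (τ - t) := by
  simp only [stftTimeInv, conjModulate, mul_assoc, ofReal_sub]

end Modulation

/-- For `x ∈ L²` and `g` continuously differentiable with `g, g' ∈ L²`,
for every `ω` the map `t ↦ V^t_g x (t, ω)` is differentiable with derivative
`∂_t V^t_g x (t, ω) = 2πiω · V^t_g x (t, ω) − V^t_{g'} x (t, ω)`. -/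
theorem stftTimeInv_hasDerivAt_time
    (x g : ℝ → ℂ)
    (hx : MemLp x 2 (volume : Measure ℝ))
    (hg_smooth : ContDiff ℝ 1 g)
    (hg : MemLp g 2 (volume : Measure ℝ))
    (hg' : MemLp (deriv g) 2 (volume : Measure ℝ)) :
    ∀ ω t : ℝ,
      HasDerivAt (fun s : ℝ => stftTimeInv g x s ω)
        (2 * Real.pi * Complex.I * (ω : ℂ) * stftTimeInv g x t ω -
          stftTimeInv (deriv g) x t ω) t := by
  intro ω t
  set c : ℂ := 2 * π * I * ω
  have hderiv : ∀ σ, HasDerivAt (conjModulate g ω)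
      (conjModulate (deriv g) ω σ - c * conjModulate g ω σ) σ := fun σ =>
    ((hg_smooth.differentiable one_ne_zero) σ).hasDerivAt.conjModulate ω
  have hderiv_cont : Continuous fun σ => conjModulate (deriv g) ω σ - c * conjModulate g ω σ :=
    ((hg_smooth.continuous_deriv le_rfl).conjModulate ω).sub
      (continuous_const.mul (hg_smooth.continuous.conjModulate ω))
  have hderiv_memLp :
      MemLp (fun σ => conjModulate (deriv g) ω σ - c * conjModulate g ω σ) 2 volume :=
    (hg'.conjModulate ω).sub ((hg.conjModulate ω).const_mul c)
  simp only [stftTimeInv_eq_integral_conjModulate]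
  convert hasDerivAt_integral_mul_comp_sub hx hderiv hderiv_cont (hg.conjModulate ω)
    hderiv_memLp t using 1
  simp only [mul_sub, mul_left_comm (x _) c]
  rw [integral_sub (integrable_mul_comp_sub hx (hg'.conjModulate ω) t)
    ((integrable_mul_comp_sub hx (hg.conjModulate ω) t).const_mul c), integral_const_mul]
  ring
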